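/- arXiv:1410.2501 — 3 statements merged into one kernel-verified Lean document; each statement's English description precedes it below -/
import Mathlib

section
/- In the synchronous crash-failure model with full-information protocols, a process i knows at time m that some process had initial value 0 if and only if there exists a 0-chain for (i,m): a sequence of distinct processes j_0, j_1, ..., j_d = i with d ≤ m such that j_0 has initial value 0 and for every 1 ≤ k ≤ d, process j_k receives a message from j_{k-1} in round k. -/
attribute [local instance] Classical.propDecidable

/-- An adversary in the synchronous crash-failure model: an input vector of binary
initial values, a failure pattern given by the delivery relation `F` (`F m j i` means
the message sent by `j` at time `m` is delivered to `i` at time `m+1`, i.e. in round `m+1`),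
and a crash round for each process (`⊤` meaning the process never crashes).
A process behaves correctly before its crashing round and sends nothing afterwards;
during its crashing round it may send to an arbitrary subset. -/
structure Adversary (n : ℕ) where
  init : Fin n → Bool
  F : ℕ → Fin n → Fin n → Prop
  crash : Fin n → ℕ∞
  crash_pos : ∀ j, 1 ≤ crash j
  before_crash : ∀ (m : ℕ) (j i : Fin n), ((m + 1 : ℕ) : ℕ∞) < crash j → F m j i
  after_crash : ∀ (m : ℕ) (j i : Fin n), crash j < ((m + 1 : ℕ) : ℕ∞) → ¬ F m j i

namespace Adversary

variable {n : ℕ}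

/-- A process is faulty if it crashes at some point. -/
def Faulty (A : Adversary n) (j : Fin n) : Prop := A.crash j ≠ ⊤

/-- The number `f` of actual failures in the run determined by the adversary. -/
noncomputable def numFaults (A : Adversary n) : ℕ := {j | A.Faulty j}.ncard

/-- A process is active at time `m` if it has not crashed before time `m`. -/
def Active (A : Adversary n) (j : Fin n) (m : ℕ) : Prop := ((m : ℕ) : ℕ∞) < A.crash j

end Adversary

/-- `Seen A ⟨j,ℓ⟩ ⟨i,m⟩`: node `⟨j,ℓ⟩` is in the view (communication graph) of node
`⟨i,m⟩`, i.e. there is a message chain from `⟨j,ℓ⟩` to `⟨i,m⟩`. -/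
inductive Seen {n : ℕ} (A : Adversary n) : Fin n × ℕ → Fin n × ℕ → Prop
  | refl (p : Fin n × ℕ) : Seen A p p
  | self {p : Fin n × ℕ} {i : Fin n} {m : ℕ} : Seen A p (i, m) → Seen A p (i, m + 1)
  | step {p : Fin n × ℕ} {j i : Fin n} {m : ℕ} : Seen A p (j, m) → A.F m j i →
      Seen A p (i, m + 1)

open Adversary

/-- Two adversaries give process `i` the same view at time `m` in a full-information
protocol: the same nodes are seen, with the same initial values at seen time-0 nodes
and the same incoming edges at seen later nodes. -/
def sameView {n : ℕ} (A B : Adversary n) (i : Fin n) (m : ℕ) : Prop :=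
  (∀ p, Seen A p (i, m) ↔ Seen B p (i, m)) ∧
  (∀ j, Seen A (j, 0) (i, m) → A.init j = B.init j) ∧
  (∀ (k : ℕ) (j j' : Fin n), Seen A (j', k + 1) (i, m) → (A.F k j j' ↔ B.F k j j'))

/-- The local state of (active) process `i` at time `m` is the same under both
adversaries: `i` is active in both and has the same full-information view. -/
def sameLocal {n : ℕ} (A B : Adversary n) (i : Fin n) (m : ℕ) : Prop :=
  A.Active i m ∧ B.Active i m ∧ sameView A B i m

/-- The runs of the system are those generated by adversaries with at most `t` crashes. -/
def Valid {n : ℕ} (t : ℕ) (A : Adversary n) : Prop := A.numFaults ≤ t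

/-- Knowledge in the full-information protocol: `i` knows the fact `φ` at time `m`
iff `φ` holds at time `m` in every run (with at most `t` failures) in which `i` has
the same local state. -/
def Knows {n : ℕ} (t : ℕ) (φ : Adversary n → ℕ → Prop) (A : Adversary n) (i : Fin n)
    (m : ℕ) : Prop :=
  ∀ B : Adversary n, Valid t B → sameLocal A B i m → φ B m

/-- The fact `∃v`: some process has initial value `v`. -/
def existsVal {n : ℕ} (v : Bool) : Adversary n → ℕ → Prop := fun A _ => ∃ j, A.init j = v

/-- Node `⟨j',m'⟩` is revealed to `⟨i,m⟩`: either it is seen by `⟨i,m⟩`, or for some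
seen node `⟨i',m'⟩` the edge `(⟨j',m'-1⟩,⟨i',m'⟩)` is absent from `i`'s view
(proving that `j'` crashed before time `m'`). -/
def RevealedNode {n : ℕ} (A : Adversary n) (j' : Fin n) (m' : ℕ) (i : Fin n) (m : ℕ) :
    Prop :=
  Seen A (j', m') (i, m) ∨
  ∃ (i' : Fin n) (k : ℕ), m' = k + 1 ∧ Seen A (i', k + 1) (i, m) ∧ ¬ A.F k j' i'

/-- Time `k` is revealed to `⟨i,m⟩` if every node `⟨j',k⟩` is revealed to `⟨i,m⟩`. -/
def RevealedTime {n : ℕ} (A : Adversary n) (k : ℕ) (i : Fin n) (m : ℕ) : Prop :=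
  ∀ j', RevealedNode A j' k i m

/-- A hidden path w.r.t. `⟨i,m⟩`: for each `k ≤ m` a node `⟨j_k,k⟩` not revealed to `⟨i,m⟩`. -/
def HiddenPath {n : ℕ} (A : Adversary n) (i : Fin n) (m : ℕ) : Prop :=
  ∃ js : ℕ → Fin n, ∀ k ≤ m, ¬ RevealedNode A (js k) k i m

/-- `not-known(∃0)`: no process active at time `m` knows `∃0`. -/
def notKnown0 {n : ℕ} (t : ℕ) : Adversary n → ℕ → Prop :=
  fun A m => ∀ j, A.Active j m → ¬ Knows t (existsVal false) A j m

/-- A (full-information, deterministic) decision protocol, described by the decision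
status function: `P A i m = some v` iff by time `m` process `i` has decided `v`
in the run determined by adversary `A`. -/
abbrev ProtoDec (n : ℕ) : Type := Adversary n → Fin n → ℕ → Option Bool

/-- Sanity conditions making a decision-status function a protocol: decisions are
irrevocable, and (for active processes) depend only on the local state. -/
def IsProtocol {n : ℕ} (t : ℕ) (P : ProtoDec n) : Prop :=
  (∀ A i m v, P A i m = some v → P A i (m + 1) = some v) ∧
  (∀ A B i m, Valid t A → Valid t B → sameLocal A B i m → P A i m = P B i m)

/-- Process `i` performs the action `decide(v)` at time `m`: it is decided on `v`
at `m` and was undecided before. -/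
def DecidesAt {n : ℕ} (P : ProtoDec n) (A : Adversary n) (i : Fin n) (m : ℕ) (v : Bool) :
    Prop :=
  P A i m = some v ∧ ∀ k < m, P A i k = none

/-- Decision: every correct process eventually decides. -/
def Decision {n : ℕ} (t : ℕ) (P : ProtoDec n) : Prop :=
  ∀ A : Adversary n, Valid t A → ∀ i, ¬ A.Faulty i → ∃ m, P A i m ≠ none

/-- Validity: if all initial values are `v` then correct processes decide `v`. -/
def Validity {n : ℕ} (t : ℕ) (P : ProtoDec n) : Prop :=
  ∀ A : Adversary n, Valid t A → ∀ v : Bool, (∀ j, A.init j = v) →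
    ∀ i m w, ¬ A.Faulty i → P A i m = some w → w = v

/-- Agreement: all correct processes decide on the same value. -/
def Agreement {n : ℕ} (t : ℕ) (P : ProtoDec n) : Prop :=
  ∀ A : Adversary n, Valid t A → ∀ i j m m' v w, ¬ A.Faulty i → ¬ A.Faulty j →
    P A i m = some v → P A j m' = some w → v = w

def ConsensusSolves {n : ℕ} (t : ℕ) (P : ProtoDec n) : Prop :=
  Decision t P ∧ Validity t P ∧ Agreement t P

/-- Uniform Agreement: all processes that decide (faulty or not) decide the same value. -/
def UniformAgreement {n : ℕ} (t : ℕ) (P : ProtoDec n) : Prop :=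
  ∀ A : Adversary n, Valid t A → ∀ i j m m' v w,
    P A i m = some v → P A j m' = some w → v = w

def UniformConsensusSolves {n : ℕ} (t : ℕ) (P : ProtoDec n) : Prop :=
  Decision t P ∧ Validity t P ∧ UniformAgreement t P

/-- `Q` dominates `P`: for every adversary and process, if `i` has decided by time `m`
in `P` then `i` has decided by time `m` in `Q`. -/
def Dominates {n : ℕ} (t : ℕ) (Q P : ProtoDec n) : Prop :=
  ∀ A : Adversary n, Valid t A → ∀ i m, P A i m ≠ none → Q A i m ≠ none

def StrictlyDominates {n : ℕ} (t : ℕ) (Q P : ProtoDec n) : Prop :=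
  Dominates t Q P ∧ ¬ Dominates t P Q

/-- Turn a per-time decision rule into a decision-status function (the first decision
taken is kept forever). -/
def runDec (step : ℕ → Option Bool) : ℕ → Option Bool
  | 0 => step 0
  | m + 1 => (runDec step m).elim (step (m + 1)) some

/-- The protocol `P₀`: decide 0 as soon as `K_i ∃0` holds, otherwise decide 1 at time `t+1`. -/
noncomputable def P0 (n t : ℕ) : ProtoDec n := fun A i =>
  runDec fun m =>
    if Knows t (existsVal false) A i m then some false
    else if m = t + 1 then some true
    else none

/-- The unbeatable protocol `Opt₀`: decide 0 as soon as `K_i ∃0` holds, and decide 1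
as soon as `K_i not-known(∃0)` holds. -/
noncomputable def Opt0 (n t : ℕ) : ProtoDec n := fun A i =>
  runDec fun m =>
    if Knows t (existsVal false) A i m then some false
    else if Knows t (notKnown0 t) A i m then some true
    else none

/-- The number of processes with initial value `false` (0). -/
noncomputable def zeros {n : ℕ} (A : Adversary n) : ℕ :=
  (Finset.univ.filter fun j => A.init j = false).card

/-- The number of processes with initial value `true` (1). -/
noncomputable def ones {n : ℕ} (A : Adversary n) : ℕ :=
  (Finset.univ.filter fun j => A.init j = true).card

/-- The fact `Maj = 0`: at least `n/2` initial values are 0. -/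
def Maj0 (n : ℕ) : Adversary n → ℕ → Prop := fun A _ => n ≤ 2 * zeros A

/-- The fact `Maj = 1`: strictly more than `n/2` initial values are 1. -/
def Maj1 (n : ℕ) : Adversary n → ℕ → Prop := fun A _ => n < 2 * ones A

noncomputable def seenZeros {n : ℕ} (A : Adversary n) (i : Fin n) (m : ℕ) : ℕ :=
  (Finset.univ.filter fun j => Seen A (j, 0) (i, m) ∧ A.init j = false).card

noncomputable def seenOnes {n : ℕ} (A : Adversary n) (i : Fin n) (m : ℕ) : ℕ :=
  (Finset.univ.filter fun j => Seen A (j, 0) (i, m) ∧ A.init j = true).card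

/-- `Maj(vals(i,m))`: 0 if at least half of the initial values known to `i` at `m`
are 0, and 1 otherwise. -/
noncomputable def MajSeen {n : ℕ} (A : Adversary n) (i : Fin n) (m : ℕ) : Bool :=
  if seenOnes A i m ≤ seenZeros A i m then false else true

/-- The unbeatable majority consensus protocol `Opt_Maj`. -/
noncomputable def OptMaj (n t : ℕ) : ProtoDec n := fun A i =>
  runDec fun m =>
    if Knows t (Maj0 n) A i m then some false
    else if Knows t (Maj1 n) A i m then some true
    else if ∃ k ≤ m, RevealedTime A k i m then some (MajSeen A i m)
    else none

/-- The fact `∀1`: all initial values are 1. -/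
def all1 (n : ℕ) : Adversary n → ℕ → Prop := fun A _ => ∀ j, A.init j = true

/-- The sender set of `i` repeats at `⟨i,m⟩`: `i` hears from the same set of processes
in rounds `m-1` and `m` (only meaningful for `m ≥ 2`). -/
def senderSetRepeats {n : ℕ} (A : Adversary n) (i : Fin n) (m : ℕ) : Prop :=
  ∀ j, (A.F (m - 2) j i ↔ A.F (m - 1) j i)

/-- The protocol `P0_opt` of Halpern, Moses and Waarts. -/
noncomputable def P0opt (n t : ℕ) : ProtoDec n := fun A i =>
  runDec fun m =>
    if Knows t (existsVal false) A i m then some false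
    else if Knows t (all1 n) A i m ∨ (2 ≤ m ∧ senderSetRepeats A i m) then some true
    else none

/-- The fact `∃correct(v)`: some correct (never-failing) process knows `∃v`. -/
def ExistsCorrectKnows {n : ℕ} (t : ℕ) (v : Bool) : Adversary n → ℕ → Prop :=
  fun A m => ∃ j, ¬ A.Faulty j ∧ Knows t (existsVal v) A j m

/-- The number `d` of failures process `i` knows of at time `m`: the number of
processes `j ≠ i` from which `i` receives no message in round `m`. -/
noncomputable def knownFaults {n : ℕ} (A : Adversary n) (i : Fin n) : ℕ → ℕ
  | 0 => 0
  | m + 1 => (Finset.univ.filter fun j => j ≠ i ∧ ¬ A.F m j i).card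

/-- The protocol `u-P₀` for uniform consensus: decide 0 as soon as
`K_i ∃correct(0)` holds, otherwise decide 1 at time `t+1`. -/
noncomputable def uP0 (n t : ℕ) : ProtoDec n := fun A i =>
  runDec fun m =>
    if Knows t (ExistsCorrectKnows t false) A i m then some false
    else if m = t + 1 then some true
    else none

/-- The unbeatable uniform consensus protocol `u-Opt₀`. -/
noncomputable def uOpt0 (n t : ℕ) : ProtoDec n := fun A i =>
  runDec fun m =>
    if Knows t (ExistsCorrectKnows t false) A i m then some false
    else if ¬ Knows t (existsVal false) A i m ∧ ∃ k ≤ m, RevealedTime A k i m then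
      some true
    else none

/-- All decisions in the run `P[A]` are taken at or before time `m`. -/
def AllDecidedBy {n : ℕ} (P : ProtoDec n) (A : Adversary n) (m : ℕ) : Prop :=
  ∀ i k, P A i k ≠ none → P A i m ≠ none

/-- `Q` last-decider dominates `P`. -/
def LDDominates {n : ℕ} (t : ℕ) (Q P : ProtoDec n) : Prop :=
  ∀ A : Adversary n, Valid t A → ∀ m, AllDecidedBy P A m → AllDecidedBy Q A m

/-- A 0-chain for `⟨i,m⟩`: distinct processes `j₀,…,j_d = i` with `d ≤ m`, `j₀` having
initial value 0, and `j_k` receiving a message from `j_{k-1}` at time `k` (round `k`). -/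
def ZeroChain {n : ℕ} (A : Adversary n) (i : Fin n) (m : ℕ) : Prop :=
  ∃ d ≤ m, ∃ js : ℕ → Fin n, js d = i ∧
    (∀ k ≤ d, ∀ l ≤ d, js k = js l → k = l) ∧
    A.init (js 0) = false ∧
    ∀ k, 1 ≤ k → k ≤ d → A.F (k - 1) (js (k - 1)) (js k)

/-! A process knows `∃0` exactly when its view contains a time-0 node with value 0: if it
does not, the run in which every unseen process starts with 1 is indistinguishable to it.
A message chain from such a node can be shortened to one through distinct processes,
sending in consecutive rounds, because a process whose message is delivered in some round
delivered all its messages in earlier rounds. -/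

namespace Adversary

variable {n : ℕ}

theorem F_of_le_of_F (A : Adversary n) {k k' : ℕ} {j i : Fin n} (hk : k' ≤ k)
    (h : A.F k j i) : A.F k' j i := by
  rcases hk.lt_or_eq with hk | rfl
  · refine A.before_crash k' j i (lt_of_not_ge fun hc => A.after_crash k j i ?_ h)
    exact hc.trans_lt (by exact_mod_cast Nat.succ_lt_succ hk)
  · exact h

def withInit (A : Adversary n) (v : Fin n → Bool) : Adversary n := { A with init := v }

end Adversary

open Adversary

section Seen

variable {n : ℕ} {A B : Adversary n}

theorem Seen.of_F_imp (hF : ∀ k j i, A.F k j i → B.F k j i) {p q : Fin n × ℕ}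
    (h : Seen A p q) : Seen B p q := by
  induction h with
  | refl => exact .refl _
  | self _ ih => exact ih.self
  | step _ hf ih => exact ih.step (hF _ _ _ hf)

theorem seen_withInit_iff (v : Fin n → Bool) {p q : Fin n × ℕ} :
    Seen (A.withInit v) p q ↔ Seen A p q :=
  ⟨Seen.of_F_imp (A := A.withInit v) (B := A) fun _ _ _ => id,
    Seen.of_F_imp (A := A) (B := A.withInit v) fun _ _ _ => id⟩

theorem Seen.mono_time {p : Fin n × ℕ} {i : Fin n} {m m' : ℕ} (h : Seen A p (i, m))
    (hm : m ≤ m') : Seen A p (i, m') := by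
  induction m', hm using Nat.le_induction with
  | base => exact h
  | succ _ _ ih => exact ih.self

end Seen

section ZeroChain

variable {n : ℕ} {A : Adversary n}

/-- The conditions on `js 0, …, js d` in `ZeroChain`, so that `ZeroChain A i m` unfolds to
`∃ d ≤ m, ∃ js, js d = i ∧ IsZeroChain A js d`. -/
def IsZeroChain (A : Adversary n) (js : ℕ → Fin n) (d : ℕ) : Prop :=
  (∀ k ≤ d, ∀ l ≤ d, js k = js l → k = l) ∧
    A.init (js 0) = false ∧
    ∀ k, 1 ≤ k → k ≤ d → A.F (k - 1) (js (k - 1)) (js k)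

namespace IsZeroChain

variable {js : ℕ → Fin n} {d : ℕ}

theorem take (h : IsZeroChain A js d) {e : ℕ} (he : e ≤ d) : IsZeroChain A js e :=
  ⟨fun k hk l hl => h.1 k (hk.trans he) l (hl.trans he), h.2.1,
    fun k hk hke => h.2.2 k hk (hke.trans he)⟩

theorem snoc (h : IsZeroChain A js d) {i : Fin n} (hi : ∀ e ≤ d, js e ≠ i)
    (hF : A.F d (js d) i) : IsZeroChain A (Function.update js (d + 1) i) (d + 1) := by
  have hjs : ∀ k ≤ d, Function.update js (d + 1) i k = js k := fun k hk =>
    Function.update_of_ne (by omega) _ _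
  refine ⟨fun k hk l hl hkl => ?_, by rw [hjs 0 (Nat.zero_le d)]; exact h.2.1,
    fun k hk hkd => ?_⟩
  · rcases hk.lt_or_eq with hk | rfl <;> rcases hl.lt_or_eq with hl | rfl
    · rw [hjs k (by omega), hjs l (by omega)] at hkl
      exact h.1 k (by omega) l (by omega) hkl
    · rw [hjs k (by omega), Function.update_self] at hkl
      exact absurd hkl (hi k (by omega))
    · rw [hjs l (by omega), Function.update_self] at hkl
      exact absurd hkl.symm (hi l (by omega))
    · rfl
  · rw [hjs (k - 1) (by omega)]
    rcases hkd.lt_or_eq with hkd | rfl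
    · rw [hjs k (by omega)]
      exact h.2.2 k hk (by omega)
    · simpa only [Nat.add_sub_cancel, Function.update_self] using hF

theorem seen (h : IsZeroChain A js d) : ∀ k ≤ d, Seen A (js 0, 0) (js k, k)
  | 0, _ => .refl _
  | k + 1, hk => (h.seen k (by omega)).step (h.2.2 (k + 1) (by omega) hk)

end IsZeroChain

theorem ZeroChain.mono_time {i : Fin n} {m m' : ℕ} (h : ZeroChain A i m) (hm : m ≤ m') :
    ZeroChain A i m' :=
  let ⟨d, hd, js, hjs, hchain⟩ := h
  ⟨d, hd.trans hm, js, hjs, hchain⟩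

/-- Extending a 0-chain by a delivered message: if the receiver already occurs on the chain,
cut the chain there; otherwise append it, using that the last process sent at time `k` and
hence also at the chain's end `d ≤ k`. -/
theorem ZeroChain.step {j i : Fin n} {k : ℕ} (h : ZeroChain A j k) (hF : A.F k j i) :
    ZeroChain A i (k + 1) := by
  obtain ⟨d, hd, js, rfl, hchain : IsZeroChain A js d⟩ := h
  by_cases hi : ∃ e ≤ d, js e = i
  · obtain ⟨e, hed, rfl⟩ := hi
    exact ⟨e, by omega, js, rfl, hchain.take hed⟩
  · push Not at hi
    exact ⟨d + 1, by omega, _, Function.update_self _ _ _,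
      hchain.snoc hi (A.F_of_le_of_F hd hF)⟩

theorem Seen.zeroChain {j : Fin n} {p : Fin n × ℕ} (h : Seen A (j, 0) p)
    (hj : A.init j = false) : ZeroChain A p.1 p.2 := by
  induction h with
  | refl => exact ⟨0, le_rfl, fun _ => j, rfl, fun _ _ _ _ _ => by omega, hj, by omega⟩
  | self _ ih => exact ih.mono_time (Nat.le_succ _)
  | step _ hF ih => exact ih.step hF

theorem zeroChain_iff_exists_seen {i : Fin n} {m : ℕ} :
    ZeroChain A i m ↔ ∃ j, Seen A (j, 0) (i, m) ∧ A.init j = false := by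
  constructor
  · rintro ⟨d, hd, js, rfl, hchain : IsZeroChain A js d⟩
    exact ⟨js 0, (hchain.seen d le_rfl).mono_time hd, hchain.2.1⟩
  · rintro ⟨j, hseen, hj⟩
    exact hseen.zeroChain hj

end ZeroChain

section Knowledge

variable {n t : ℕ} {A : Adversary n} {i : Fin n} {m : ℕ}

theorem knows_existsVal_of_seen {v : Bool} {j : Fin n} (hseen : Seen A (j, 0) (i, m))
    (hj : A.init j = v) : Knows t (existsVal v) A i m :=
  fun _ _ hsame => ⟨j, (hsame.2.2.2.1 j hseen).symm.trans hj⟩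

theorem sameLocal_withInit (hact : A.Active i m) {v : Fin n → Bool}
    (hv : ∀ j, Seen A (j, 0) (i, m) → A.init j = v j) : sameLocal A (A.withInit v) i m :=
  ⟨hact, hact, fun _ => (seen_withInit_iff v).symm, hv, fun _ _ _ _ => Iff.rfl⟩

theorem exists_seen_of_knows_existsVal (hA : Valid t A) (hact : A.Active i m) {v : Bool}
    (hk : Knows t (existsVal v) A i m) : ∃ j, Seen A (j, 0) (i, m) ∧ A.init j = v := by
  let w : Fin n → Bool := fun j => if Seen A (j, 0) (i, m) then A.init j else !v
  obtain ⟨j, hj⟩ := hk (A.withInit w) hA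
    (sameLocal_withInit hact fun j hj => (if_pos hj).symm)
  by_cases hseen : Seen A (j, 0) (i, m)
  · exact ⟨j, hseen, (if_pos hseen).symm.trans hj⟩
  · exact absurd ((if_neg hseen).symm.trans hj) (Bool.not_ne_self v)

theorem knows_existsVal_iff_exists_seen (hA : Valid t A) (hact : A.Active i m) {v : Bool} :
    Knows t (existsVal v) A i m ↔ ∃ j, Seen A (j, 0) (i, m) ∧ A.init j = v :=
  ⟨exists_seen_of_knows_existsVal hA hact, fun ⟨_, hseen, hj⟩ =>
    knows_existsVal_of_seen hseen hj⟩

end Knowledge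

theorem knows_exists_zero_iff_zero_chain_general (n t : ℕ)
    (A : Adversary n) (hA : Valid t A) (i : Fin n) (m : ℕ) (hact : A.Active i m) :
    Knows t (existsVal false) A i m ↔ ZeroChain A i m := by
  rw [knows_existsVal_iff_exists_seen hA hact, zeroChain_iff_exists_seen]

/-- In a full-information protocol in the crash-failure model, an active process `i`
knows `∃0` at time `m` iff there is a 0-chain for `⟨i,m⟩`. -/
theorem knows_exists_zero_iff_zero_chain (n t : ℕ) (ht : t < n)
    (A : Adversary n) (hA : Valid t A) (i : Fin n) (m : ℕ) (hact : A.Active i m) :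
    Knows t (existsVal false) A i m ↔ ZeroChain A i m :=
  knows_exists_zero_iff_zero_chain_general n t A hA i m hact
end

section
/- Let P be a full-information protocol in which decide_i(0) is performed exactly when K_i∃0 first holds. Then for every run r and time m: K_i(no active process has decided or is deciding 0) holds at (r,m) if and only if K_i(no active process knows ∃0) holds at (r,m). -/
attribute [local instance] Classical.propDecidable

open Adversary

/-!
Under the hypothesis on `P`, an active process has decided 0 exactly when it knows `∃0`:
knowledge of `∃0` persists because a local state at time `m` determines the local
states of the same process at all earlier times. So in every run the fact "no active
process has decided 0" coincides with `not-known(∃0)`, and knowledge of the one is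
knowledge of the other.
-/

namespace Seen

variable {n : ℕ} {A : Adversary n}

theorem trans {p q r : Fin n × ℕ} (hpq : Seen A p q) (hqr : Seen A q r) : Seen A p r := by
  induction hqr with
  | refl => exact hpq
  | self _ ih => exact Seen.self ih
  | step _ hF ih => exact Seen.step ih hF

theorem of_le {p : Fin n × ℕ} {i : Fin n} {k m : ℕ} (h : Seen A p (i, k)) (hkm : k ≤ m) :
    Seen A p (i, m) := by
  induction hkm with
  | refl => exact h
  | step _ ih => exact Seen.self ih

end Seen

theorem Adversary.Active.of_le {n : ℕ} {A : Adversary n} {j : Fin n} {k m : ℕ}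
    (h : A.Active j m) (hkm : k ≤ m) : A.Active j k :=
  lt_of_le_of_lt (by exact_mod_cast hkm) h

namespace sameView

variable {n : ℕ} {A B : Adversary n} {i : Fin n} {m : ℕ}

theorem symm (h : sameView A B i m) : sameView B A i m := by
  obtain ⟨hseen, hinit, hF⟩ := h
  exact ⟨fun p => (hseen p).symm,
    fun j hj => (hinit j ((hseen _).mpr hj)).symm,
    fun k j j' hj => (hF k j j' ((hseen _).mpr hj)).symm⟩

theorem seen_of_seen (h : sameView A B i m) {p q : Fin n × ℕ} (hpq : Seen A p q)
    (hq : Seen A q (i, m)) : Seen B p q := by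
  induction hpq with
  | refl => exact Seen.refl _
  | self _ ih => exact Seen.self (ih (Seen.trans (Seen.self (Seen.refl _)) hq))
  | @step j j' l _ hF ih =>
      exact Seen.step (ih (Seen.trans (Seen.step (Seen.refl _) hF) hq)) ((h.2.2 l j j' hq).mp hF)

theorem of_le (h : sameView A B i m) {k : ℕ} (hkm : k ≤ m) : sameView A B i k := by
  have hA : Seen A (i, k) (i, m) := (Seen.refl _).of_le hkm
  have hB : Seen B (i, k) (i, m) := (h.1 _).mp hA
  exact ⟨fun p => ⟨fun hp => h.seen_of_seen hp hA, fun hp => h.symm.seen_of_seen hp hB⟩,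
    fun j hj => h.2.1 j (hj.trans hA), fun l j j' hj => h.2.2 l j j' (hj.trans hA)⟩

end sameView

theorem sameLocal.of_le {n : ℕ} {A B : Adversary n} {i : Fin n} {m k : ℕ}
    (h : sameLocal A B i m) (hkm : k ≤ m) : sameLocal A B i k :=
  ⟨h.1.of_le hkm, h.2.1.of_le hkm, h.2.2.of_le hkm⟩

section Knows

variable {n t : ℕ} {φ ψ : Adversary n → ℕ → Prop} {A : Adversary n} {i : Fin n} {m : ℕ}

theorem Knows.of_le {k : ℕ} (h : Knows t φ A i k) (hkm : k ≤ m)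
    (hφ : ∀ B, φ B k → φ B m) : Knows t φ A i m :=
  fun B hB hL => hφ B (h B hB (hL.of_le hkm))

theorem knows_congr (hφψ : ∀ B : Adversary n, Valid t B → (φ B m ↔ ψ B m)) :
    Knows t φ A i m ↔ Knows t ψ A i m :=
  ⟨fun h B hB hL => (hφψ B hB).mp (h B hB hL), fun h B hB hL => (hφψ B hB).mpr (h B hB hL)⟩

theorem knows_existsVal_iff_exists_le {v : Bool} :
    Knows t (existsVal v) A i m ↔ ∃ k ≤ m, Knows t (existsVal v) A i k :=
  ⟨fun h => ⟨m, le_rfl, h⟩, fun ⟨_, hkm, h⟩ => h.of_le hkm fun _ => id⟩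

end Knows

theorem knows_no_decided_iff_knows_not_known_general (n t : ℕ)
    (P : ProtoDec n)
    (hdec0 : ∀ A : Adversary n, Valid t A → ∀ (i : Fin n) (m : ℕ), A.Active i m →
      (P A i m = some false ↔ ∃ k ≤ m, Knows t (existsVal false) A i k)) :
    ∀ A : Adversary n, Valid t A → ∀ (i : Fin n) (m : ℕ), A.Active i m →
      (Knows t (fun B k => ∀ j, B.Active j k → P B j k ≠ some false) A i m ↔
       Knows t (notKnown0 t) A i m) := by
  intro A _ i m _
  have decided_iff_knows : ∀ B, Valid t B → ∀ j, B.Active j m →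
      (P B j m = some false ↔ Knows t (existsVal false) B j m) := fun B hB j hj =>
    (hdec0 B hB j m hj).trans knows_existsVal_iff_exists_le.symm
  refine knows_congr fun B hB => forall_congr' fun j => ?_
  exact forall_congr' fun hj => not_congr (decided_iff_knows B hB j hj)

/-- If `P` is a fip in which `decide(0)` is performed exactly when `K_i ∃0` first
holds, then `K_i no-decided(0)` is equivalent to `K_i not-known(∃0)`. -/
theorem knows_no_decided_iff_knows_not_known (n t : ℕ) (ht : t < n)
    (P : ProtoDec n) (hP : IsProtocol t P)
    (hdec0 : ∀ A : Adversary n, Valid t A → ∀ (i : Fin n) (m : ℕ), A.Active i m →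
      (P A i m = some false ↔ ∃ k ≤ m, Knows t (existsVal false) A i k)) :
    ∀ A : Adversary n, Valid t A → ∀ (i : Fin n) (m : ℕ), A.Active i m →
      (Knows t (fun B k => ∀ j, B.Active j k → P B j k ≠ some false) A i m ↔
       Knows t (notKnown0 t) A i m) :=
  knows_no_decided_iff_knows_not_known_general n t P hdec0
end

section
/- The protocol Opt_0 solves consensus in the crash-failure model with at most t < n failures: it satisfies Decision (every correct process decides, by time t+1 at the latest), Validity, and Agreement. -/
attribute [local instance] Classical.propDecidable

open Adversary

/-!
Process `i` knows `∃0` exactly when some initial node with value 0 lies in its view: otherwise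
the run in which every unseen initial value is 1 looks the same to `i`. Since at most `t`
processes crash, some round `k + 1 ≤ t + 1` is crash-free. A value seen at time `t + 1` by a
process that is still active has passed through a process that survives round `k + 1`, and that
process delivered it to everybody. So at time `t + 1` a process that does not know `∃0` knows
that no active process knows it, and `Opt₀` has decided. Agreement holds because
`not-known(∃0)` is stable, whereas knowledge of `∃0` is never lost.
-/

namespace Adversary

variable {n : ℕ} {A : Adversary n}

theorem active_iff_succ_le_crash {j : Fin n} {m : ℕ} :
    A.Active j m ↔ ((m + 1 : ℕ) : ℕ∞) ≤ A.crash j := by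
  rw [Nat.cast_succ, ENat.add_one_le_iff (ENat.natCast_ne_top m), Active]

theorem active_of_F {m : ℕ} {j i : Fin n} (h : A.F m j i) : A.Active j m :=
  active_iff_succ_le_crash.mpr (not_lt.mp fun hc => A.after_crash m j i hc h)

theorem Active.mono {j : Fin n} {m m' : ℕ} (h : A.Active j m') (hm : m ≤ m') : A.Active j m :=
  lt_of_le_of_lt (by exact_mod_cast hm) h

theorem active_of_not_faulty {j : Fin n} (h : ¬ A.Faulty j) (m : ℕ) : A.Active j m := by
  rw [Active, not_not.mp h]
  exact ENat.natCast_lt_top m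

theorem exists_crash_free_round {t : ℕ} (hA : Valid t A) :
    ∃ k ≤ t, ∀ j, A.crash j ≠ ((k + 1 : ℕ) : ℕ∞) := by
  set crashRounds := (Finset.univ.filter A.Faulty).image fun j => (A.crash j).toNat
  have hcard : crashRounds.card < ((Finset.range (t + 1)).image (· + 1)).card := by
    have hfaulty : (Finset.univ.filter A.Faulty).card = A.numFaults := by
      rw [numFaults, Set.ncard_eq_toFinset_card', Set.toFinset_ofPred]
    rw [Finset.card_image_of_injective _ (add_left_injective 1), Finset.card_range]
    exact Nat.lt_succ_of_le ((Finset.card_image_le.trans hfaulty.le).trans hA)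
  obtain ⟨r, hr, hr_free⟩ := Finset.exists_mem_notMem_of_card_lt_card hcard
  obtain ⟨k, hk, rfl⟩ := Finset.mem_image.mp hr
  refine ⟨k, Nat.lt_succ_iff.mp (Finset.mem_range.mp hk), fun j hj => hr_free ?_⟩
  refine Finset.mem_image.mpr ⟨j, ?_, by rw [hj, ENat.toNat_natCast]⟩
  simp [Faulty, hj]

noncomputable def trueOutsideView (A : Adversary n) (i : Fin n) (m : ℕ) : Adversary n where
  init j := if Seen A (j, 0) (i, m) then A.init j else true
  F := A.F
  crash := A.crash
  crash_pos := A.crash_pos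
  before_crash := A.before_crash
  after_crash := A.after_crash

end Adversary

namespace Seen

variable {n : ℕ} {A : Adversary n}

theorem mono_time_s9 {p : Fin n × ℕ} {i : Fin n} {m m' : ℕ} (h : Seen A p (i, m)) (hm : m ≤ m') :
    Seen A p (i, m') := by
  induction m', hm using Nat.le_induction with
  | base => exact h
  | succ _ _ ih => exact ih.self

theorem of_succ {p : Fin n × ℕ} {i : Fin n} {m : ℕ} (h : Seen A p (i, m + 1)) :
    p = (i, m + 1) ∨ Seen A p (i, m) ∨ ∃ j, Seen A p (j, m) ∧ A.F m j i := by
  cases h with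
  | refl => exact Or.inl rfl
  | self h => exact Or.inr (Or.inl h)
  | step h hF => exact Or.inr (Or.inr ⟨_, h, hF⟩)

theorem mono_F {B : Adversary n} (hF : ∀ m j i, A.F m j i → B.F m j i) {p q : Fin n × ℕ}
    (h : Seen A p q) : Seen B p q := by
  induction h with
  | refl => exact refl _
  | self _ ih => exact ih.self
  | step _ h ih => exact ih.step (hF _ _ _ h)

theorem exists_active_of_lt {p x : Fin n × ℕ} (h : Seen A p x) {k : ℕ} (hpk : p.2 ≤ k)
    (hkx : k < x.2) (hx : A.Active x.1 k) : ∃ q, Seen A p (q, k) ∧ A.Active q k := by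
  induction h with
  | refl => exact absurd hkx (not_lt.mpr hpk)
  | @self i m h ih =>
    rcases (Nat.lt_succ_iff.mp hkx).eq_or_lt with rfl | hkm
    · exact ⟨i, h, hx⟩
    · exact ih hkm hx
  | @step j i m h hF ih =>
    rcases (Nat.lt_succ_iff.mp hkx).eq_or_lt with rfl | hkm
    · exact ⟨j, h, Adversary.active_of_F hF⟩
    · exact ih hkm ((Adversary.active_of_F hF).mono hkm.le)

theorem initial_of_active {t : ℕ} (hA : Valid t A) {j j₀ : Fin n} (hj : A.Active j (t + 1))
    (h : Seen A (j₀, 0) (j, t + 1)) (i : Fin n) : Seen A (j₀, 0) (i, t + 1) := by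
  obtain ⟨k, hkt, hk_free⟩ := Adversary.exists_crash_free_round hA
  obtain ⟨q, hq, hq_active⟩ :=
    h.exists_active_of_lt (Nat.zero_le k) (Nat.lt_succ_of_le hkt) (hj.mono (hkt.trans t.le_succ))
  have hqi : A.F k q i := A.before_crash k q i
    (lt_of_le_of_ne (Adversary.active_iff_succ_le_crash.mp hq_active) (hk_free q).symm)
  exact (hq.step hqi).mono_time_s9 (Nat.succ_le_succ hkt)

end Seen

section Knowledge

variable {n t : ℕ} {A : Adversary n} {i : Fin n} {m : ℕ}

theorem Knows.holds {φ : Adversary n → ℕ → Prop} (hA : Valid t A) (hi : A.Active i m)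
    (h : Knows t φ A i m) : φ A m :=
  h A hA ⟨hi, hi, fun _ => Iff.rfl, fun _ _ => rfl, fun _ _ _ _ => Iff.rfl⟩

theorem knows_existsVal_false_of_seen (h : ∃ j, Seen A (j, 0) (i, m) ∧ A.init j = false) :
    Knows t (existsVal false) A i m := by
  obtain ⟨j, hs, h0⟩ := h
  exact fun B _ hlocal => ⟨j, (hlocal.2.2.2.1 j hs).symm.trans h0⟩

theorem knows_existsVal_false_iff (hA : Valid t A) (hi : A.Active i m) :
    Knows t (existsVal false) A i m ↔ ∃ j, Seen A (j, 0) (i, m) ∧ A.init j = false := by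
  constructor
  · intro h
    set B := A.trueOutsideView i m
    have hseen : ∀ p q, Seen A p q ↔ Seen B p q := fun p q =>
      ⟨Seen.mono_F (A := A) (B := B) fun _ _ _ => id,
        Seen.mono_F (A := B) (B := A) fun _ _ _ => id⟩
    have hlocal : sameLocal A B i m := by
      refine ⟨hi, hi, fun p => hseen p (i, m), fun j hj => ?_, fun _ _ _ _ => Iff.rfl⟩
      exact (if_pos hj).symm
    obtain ⟨j, hj⟩ := h B hA hlocal
    by_cases hs : Seen A (j, 0) (i, m)
    · exact ⟨j, hs, (if_pos hs).symm.trans hj⟩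
    · exact absurd ((if_neg hs).symm.trans hj) Bool.true_eq_false_eq_False
  · exact knows_existsVal_false_of_seen

theorem Knows.existsVal_false_mono {m' : ℕ} (hA : Valid t A) (hi : A.Active i m')
    (h : Knows t (existsVal false) A i m) (hm : m ≤ m') : Knows t (existsVal false) A i m' := by
  obtain ⟨j, hs, h0⟩ := (knows_existsVal_false_iff hA (hi.mono hm)).mp h
  exact knows_existsVal_false_of_seen ⟨j, hs.mono_time_s9 hm, h0⟩

/-- Knowledge of `∃0` at time `m + 1` comes from a process that already had it at time `m`. -/
theorem notKnown0_succ (hA : Valid t A) (h : notKnown0 t A m) : notKnown0 t A (m + 1) := by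
  intro j hj hknows
  obtain ⟨j₀, hs, h0⟩ := (knows_existsVal_false_iff hA hj).mp hknows
  rcases hs.of_succ with heq | hs | ⟨q, hs, hF⟩
  · exact absurd (congrArg Prod.snd heq) (m.succ_ne_zero).symm
  · exact h j (hj.mono m.le_succ) (knows_existsVal_false_of_seen ⟨j₀, hs, h0⟩)
  · exact h q (Adversary.active_of_F hF) (knows_existsVal_false_of_seen ⟨j₀, hs, h0⟩)

theorem notKnown0_mono {m' : ℕ} (hA : Valid t A) (h : notKnown0 t A m) (hm : m ≤ m') :
    notKnown0 t A m' := by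
  induction m', hm using Nat.le_induction with
  | base => exact h
  | succ _ _ ih => exact notKnown0_succ hA ih

theorem knows_notKnown0_of_not_knows (h : ¬ Knows t (existsVal false) A i (t + 1)) :
    Knows t (notKnown0 t) A i (t + 1) := by
  rintro B hB ⟨-, -, hview, hinit, -⟩ j hj hknows
  obtain ⟨j₀, hs, h0⟩ := (knows_existsVal_false_iff hB hj).mp hknows
  have hsA : Seen A (j₀, 0) (i, t + 1) := (hview _).mpr (hs.initial_of_active hB hj i)
  exact h (knows_existsVal_false_of_seen ⟨j₀, hsA, (hinit j₀ hsA).trans h0⟩)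

end Knowledge

section Protocol

theorem runDec_eq_some {step : ℕ → Option Bool} {m : ℕ} {v : Bool}
    (h : runDec step m = some v) : ∃ k ≤ m, step k = some v := by
  induction m with
  | zero => exact ⟨0, le_rfl, h⟩
  | succ m ih =>
    rw [runDec] at h
    cases hm : runDec step m with
    | none =>
      rw [hm] at h
      exact ⟨m + 1, le_rfl, h⟩
    | some w =>
      rw [hm, Option.elim_some] at h
      obtain ⟨k, hk, hstep⟩ := ih (hm.trans h)
      exact ⟨k, hk.trans m.le_succ, hstep⟩

theorem runDec_ne_none {step : ℕ → Option Bool} {m : ℕ} (h : step m ≠ none) :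
    runDec step m ≠ none := by
  cases m with
  | zero => exact h
  | succ m =>
    rw [runDec]
    cases runDec step m with
    | none => exact h
    | some w => exact Option.some_ne_none w

variable {n t : ℕ} {A : Adversary n} {i : Fin n} {m : ℕ}

theorem opt0_eq_some {v : Bool} (h : Opt0 n t A i m = some v) :
    ∃ k ≤ m, (v = false ∧ Knows t (existsVal false) A i k) ∨
      (v = true ∧ Knows t (notKnown0 t) A i k) := by
  obtain ⟨k, hk, hstep⟩ := runDec_eq_some h
  refine ⟨k, hk, ?_⟩
  split_ifs at hstep with h0 h1
  · exact Or.inl ⟨(Option.some.inj hstep).symm, h0⟩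
  · exact Or.inr ⟨(Option.some.inj hstep).symm, h1⟩

theorem opt0_ne_none_at_succ : Opt0 n t A i (t + 1) ≠ none := by
  refine runDec_ne_none ?_
  split_ifs with h0 h1
  · exact Option.some_ne_none false
  · exact Option.some_ne_none true
  · exact fun _ => h1 (knows_notKnown0_of_not_knows h0)

theorem opt0_validity : Validity t (Opt0 n t) := by
  intro A hA v hv i m w hi hw
  obtain ⟨k, -, ⟨rfl, hK⟩ | ⟨rfl, hK⟩⟩ := opt0_eq_some hw
  · obtain ⟨j, hj⟩ := hK.holds hA (Adversary.active_of_not_faulty hi k)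
    exact hj.symm.trans (hv j)
  · have hi_active := Adversary.active_of_not_faulty hi k
    cases v
    · exact (hK.holds hA hi_active i hi_active (knows_existsVal_false_of_seen
        ⟨i, (Seen.refl _).mono_time_s9 (Nat.zero_le k), hv i⟩)).elim
    · rfl

theorem opt0_agreement : Agreement t (Opt0 n t) := by
  suffices h : ∀ A : Adversary n, Valid t A → ∀ i j m m', ¬ A.Faulty i → ¬ A.Faulty j →
      Opt0 n t A i m = some false → Opt0 n t A j m' ≠ some true by
    intro A hA i j m m' v w hi hj hv hw
    cases v <;> cases w
    exacts [rfl, absurd hw (h A hA i j m m' hi hj hv), (h A hA j i m' m hj hi hw hv).elim, rfl]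
  intro A hA i j m m' hi hj h0 h1
  obtain ⟨k₀, -, ⟨-, hK₀⟩ | ⟨⟨⟩, -⟩⟩ := opt0_eq_some h0
  obtain ⟨k₁, -, ⟨⟨⟩, -⟩ | ⟨-, hK₁⟩⟩ := opt0_eq_some h1
  have hnk := notKnown0_mono hA (hK₁.holds hA (Adversary.active_of_not_faulty hj k₁))
    (le_max_right k₀ k₁)
  have hi_active := Adversary.active_of_not_faulty hi (max k₀ k₁)
  exact hnk i hi_active (hK₀.existsVal_false_mono hA hi_active (le_max_left k₀ k₁))

end Protocol

theorem opt0_solves_consensus_general (n t : ℕ) :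
    ConsensusSolves t (Opt0 n t) ∧
    (∀ A : Adversary n, Valid t A → ∀ i : Fin n, ¬ A.Faulty i →
      Opt0 n t A i (t + 1) ≠ none) := by
  have hdecided : ∀ A : Adversary n, Valid t A → ∀ i : Fin n, ¬ A.Faulty i →
      Opt0 n t A i (t + 1) ≠ none := fun _ _ _ _ => opt0_ne_none_at_succ
  exact ⟨⟨fun A hA i hi => ⟨t + 1, hdecided A hA i hi⟩, opt0_validity, opt0_agreement⟩,
    hdecided⟩

/-- `Opt₀` solves consensus: Decision (every correct process decides, by time `t+1`
at the latest), Validity and Agreement. -/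
theorem opt0_solves_consensus (n t : ℕ) (ht : t < n) :
    ConsensusSolves t (Opt0 n t) ∧
    (∀ A : Adversary n, Valid t A → ∀ i : Fin n, ¬ A.Faulty i →
      Opt0 n t A i (t + 1) ≠ none) :=
  opt0_solves_consensus_general n t
end
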